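/- For every n≥0, the number of 0-distant noncrossing partitions of [n] equals the number of Motzkin paths of length n, i.e. #NC_0(n) = Mot_n((1,1,1,...),(1,1,1,...)). -/

import Mathlib

/-- A step of a Motzkin path: up `(1,1)`, down `(1,-1)`, or horizontal `(1,0)`. -/
inductive MStep : Type
  | up : MStep
  | down : MStep
  | flat : MStep
  deriving DecidableEq

instance instFintypeMStep : Fintype MStep :=
  ⟨{MStep.up, MStep.down, MStep.flat}, by intro x; cases x <;> simp⟩

/-- The vertical displacement of a Motzkin step. -/
def MStep.val : MStep → ℤ
  | .up => 1
  | .down => -1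
  | .flat => 0

/-- The height of the path after its first `k` steps. -/
def mHeight (l : List MStep) (k : ℕ) : ℤ := ((l.take k).map MStep.val).sum

/-- A list of steps is a Motzkin path if it never goes below the x-axis and ends at height 0. -/
def IsMotzkin (l : List MStep) : Prop :=
  (∀ k : ℕ, 0 ≤ mHeight l k) ∧ mHeight l l.length = 0

/-- The weight of a Motzkin path w.r.t. `(b, lam)`: a factor `b i` for every horizontal step
of height `i` and a factor `lam i` for every down step of height `i` (the height of a step
being the `y`-coordinate of its ending point). -/
def mWeight (b lam : ℕ → ℚ) (l : List MStep) : ℚ :=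
  ∏ i ∈ Finset.range l.length,
    match l.getD i MStep.up with
    | .up => 1
    | .flat => b (mHeight l (i + 1)).toNat
    | .down => lam (mHeight l (i + 1)).toNat

open Classical in
/-- `Mot_n(b,lam)`: the sum of the weights of all Motzkin paths of length `n`. -/
noncomputable def motSum (n : ℕ) (b lam : ℕ → ℚ) : ℚ :=
  ∑ f : Fin n → MStep,
    if IsMotzkin (List.ofFn f) then mWeight b lam (List.ofFn f) else 0

/-- `(i, j)` is an arc of the set partition (given as an equivalence relation) `r`:
`i < j`, `i` and `j` lie in the same block, and no element strictly between `i` and `j`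
lies in that block. -/
def IsArc {n : ℕ} (r : Setoid (Fin n)) (i j : Fin n) : Prop :=
  i < j ∧ r i j ∧ ∀ k : Fin n, i < k → k < j → ¬ r i k

/-- A set partition of `[n]` (given as an equivalence relation on `Fin n`) is `k`-distant
noncrossing if it has no two arcs `(a, c)` and `(b, d)` with `a < b ≤ c < d` and `c - b ≥ k`. -/
def IsKDistantNC (k : ℕ) {n : ℕ} (r : Setoid (Fin n)) : Prop :=
  ∀ a b c d : Fin n, IsArc r a c → IsArc r b d →
    a < b → b ≤ c → c < d → (c : ℕ) - (b : ℕ) < k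

/-!
A partition of `[n]` is `0`-distant noncrossing exactly when its blocks have at most two
elements and no two of its pairs `{a < c}`, `{b < d}` satisfy `a < b ≤ c < d`, i.e. it is a
noncrossing partial matching. Writing an up step at the smaller element of each pair, a down
step at the larger one and a flat step at each singleton gives a Motzkin path whose height after
`k` steps is the number of pairs straddling `k`. Conversely, a Motzkin path gives back the
matching that pairs each up step with the first later step returning the path to its level.
-/

namespace MStep

lemma val_le_one (s : MStep) : s.val ≤ 1 := by cases s <;> decide

lemma neg_one_le_val (s : MStep) : -1 ≤ s.val := by cases s <;> decide

lemma eq_up_of_val_pos {s : MStep} (h : 0 < s.val) : s = .up := by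
  cases s <;> simp_all [MStep.val]

lemma eq_down_of_val_neg {s : MStep} (h : s.val < 0) : s = .down := by
  cases s <;> simp_all [MStep.val]

end MStep

namespace NC0

open Finset

variable {n : ℕ}

def height (f : Fin n → MStep) (k : ℕ) : ℤ :=
  ∑ i ∈ ({i | (i : ℕ) < k} : Finset (Fin n)), (f i).val

lemma height_zero (f : Fin n → MStep) : height f 0 = 0 := by simp [height]

lemma height_succ (f : Fin n → MStep) (i : Fin n) :
    height f (i + 1) = height f i + (f i).val := by
  have : ({j | (j : ℕ) < i + 1} : Finset (Fin n)) =
      insert i ({j | (j : ℕ) < i} : Finset (Fin n)) := by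
    ext j
    simp [Fin.ext_iff]
    omega
  rw [height, this, sum_insert (by simp), add_comm, height]

lemma height_of_le (f : Fin n → MStep) {k : ℕ} (hk : n ≤ k) : height f k = height f n := by
  unfold height
  congr 1
  ext j
  simp only [mem_filter, mem_univ, true_and]
  omega

lemma mHeight_ofFn (f : Fin n → MStep) (k : ℕ) : mHeight (List.ofFn f) k = height f k := by
  induction k with
  | zero => simp [mHeight, height_zero]
  | succ k ih =>
    rcases lt_or_ge k n with hk | hk
    · rw [mHeight, List.map_take, List.sum_take_succ _ _ (by simpa using hk), ← List.map_take,
        ← mHeight, ih, height_succ f ⟨k, hk⟩]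
      simp
    · rw [height_of_le f (by omega), ← height_of_le f hk, ← ih, mHeight, mHeight,
        List.take_of_length_le (by simp; omega), List.take_of_length_le (by simp; omega)]

lemma isMotzkin_ofFn_iff (f : Fin n → MStep) :
    IsMotzkin (List.ofFn f) ↔ (∀ k, 0 ≤ height f k) ∧ height f n = 0 := by
  simp only [IsMotzkin, mHeight_ofFn, List.length_ofFn]

/-- The up step `a` is matched with the down step `b`: the path first returns to its level
before `a` right after `b`. -/
def Matched (f : Fin n → MStep) (a b : Fin n) : Prop :=
  a < b ∧ height f a = height f (b + 1) ∧
    ∀ m : ℕ, a < m → m ≤ b → height f a < height f m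

namespace Matched

variable {f : Fin n → MStep} {a b : Fin n}

lemma up (h : Matched f a b) : f a = .up := by
  have := h.2.2 (a + 1) (by omega) (by have := h.1; omega)
  rw [height_succ] at this
  exact MStep.eq_up_of_val_pos (by omega)

lemma down (h : Matched f a b) : f b = .down := by
  have := h.2.2 b h.1 le_rfl
  have := h.2.1
  rw [height_succ] at this
  exact MStep.eq_down_of_val_neg (by omega)

lemma right_unique {b' : Fin n} (h : Matched f a b) (h' : Matched f a b') : b = b' := by
  by_contra hne
  rcases lt_or_gt_of_ne hne with hlt | hlt
  · have := h'.2.2 (b + 1) (by have := h.1; omega) (by omega)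
    have := h.2.1
    omega
  · have := h.2.2 (b' + 1) (by have := h'.1; omega) (by omega)
    have := h'.2.1
    omega

lemma left_unique {a' : Fin n} (h : Matched f a b) (h' : Matched f a' b) : a = a' := by
  by_contra hne
  rcases lt_or_gt_of_ne hne with hlt | hlt
  · have := h.2.2 a' hlt (le_of_lt h'.1)
    have := h.2.1
    have := h'.2.1
    omega
  · have := h'.2.2 a hlt (le_of_lt h.1)
    have := h.2.1
    have := h'.2.1
    omega

end Matched

section Motzkin

variable {f : Fin n → MStep}

lemma exists_matched_of_up (hpos : ∀ k, 0 ≤ height f k) (hend : height f n = 0) {a : Fin n}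
    (ha : f a = .up) : ∃ b, Matched f a b := by
  classical
  -- `b + 1` is the first time after `a` at which the path is back at its level before `a`.
  have hex : ∃ m : ℕ, a < m ∧ height f m ≤ height f a := ⟨n, a.isLt, hend ▸ hpos a⟩
  obtain ⟨⟨ha_lt, hle⟩, hmin⟩ := (Nat.find_eq_iff hex).mp rfl
  obtain ⟨b, hb⟩ : ∃ b, Nat.find hex = b + 1 := ⟨Nat.find hex - 1, by omega⟩
  rw [hb] at hle
  have hbn : b < n := by
    have := Nat.find_le (h := hex) (n := n) ⟨a.isLt, hend ▸ hpos a⟩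
    omega
  have habove : ∀ m : ℕ, a < m → m ≤ b → height f a < height f m := fun m h1 h2 =>
    not_le.mp (not_and.mp (hmin m (by omega)) h1)
  have hab : (a : ℕ) < b := by
    have hup : height f (a + 1) = height f a + 1 := by rw [height_succ, ha]; rfl
    by_contra! h
    rw [show b = a by omega, hup] at hle
    omega
  have hstep : height f (b + 1) = height f b + (f ⟨b, hbn⟩).val := height_succ f ⟨b, hbn⟩
  have := habove b hab le_rfl
  have := MStep.neg_one_le_val (f ⟨b, hbn⟩)
  exact ⟨⟨b, hbn⟩, hab, show height f a = height f (b + 1) by omega, habove⟩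

lemma exists_matched_of_down (hpos : ∀ k, 0 ≤ height f k) {b : Fin n} (hb : f b = .down) :
    ∃ a, Matched f a b := by
  classical
  -- `a` is the last time up to `b` at which the path is at most at its level after `b`.
  set P : ℕ → Prop := fun i => height f i ≤ height f (b + 1)
  set a := Nat.findGreatest P b
  have hPa : height f a ≤ height f (b + 1) :=
    Nat.findGreatest_spec (P := P) (Nat.zero_le _) (by simpa [P, height_zero] using hpos (b + 1))
  have hab : a < b := lt_of_le_of_ne (Nat.findGreatest_le _) fun h => by
    have hdown : height f (b + 1) = height f b - 1 := by rw [height_succ, hb]; rfl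
    rw [h] at hPa
    omega
  have habove : ∀ m : ℕ, a < m → m ≤ b → height f (b + 1) < height f m := fun m h1 h2 =>
    not_le.mp (Nat.findGreatest_is_greatest h1 h2)
  have han : a < n := by omega
  have hstep : height f (a + 1) = height f a + (f ⟨a, han⟩).val := height_succ f ⟨a, han⟩
  have := habove (a + 1) (by omega) (by omega)
  have := MStep.val_le_one (f ⟨a, han⟩)
  have hlevel : height f a = height f (b + 1) := by omega
  exact ⟨⟨a, han⟩, hab, hlevel, fun m h1 h2 => hlevel ▸ habove m h1 h2⟩

end Motzkin

def pathSetoid (f : Fin n → MStep) : Setoid (Fin n) where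
  r x y := x = y ∨ Matched f x y ∨ Matched f y x
  iseqv.refl _ := .inl rfl
  iseqv.symm := by rintro x y (rfl | h | h) <;> simp [*]
  iseqv.trans := by
    rintro x y z (rfl | h | h) (rfl | h' | h')
    all_goals first
      | simp [*]
      | exact absurd h.down (by simp [h'.up])
      | exact absurd h.up (by simp [h'.down])
      | exact .inl (h.left_unique h')
      | exact .inl (h.right_unique h')

lemma isArc_pathSetoid_iff (f : Fin n → MStep) (a b : Fin n) :
    IsArc (pathSetoid f) a b ↔ Matched f a b := by
  constructor
  · rintro ⟨hab, rfl | h | h, -⟩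
    · exact absurd hab (lt_irrefl _)
    · exact h
    · exact absurd (hab.trans h.1) (lt_irrefl _)
  · intro h
    refine ⟨h.1, .inr (.inl h), ?_⟩
    rintro k hak hkb (rfl | hk | hk)
    · exact lt_irrefl _ hak
    · exact hkb.ne' (h.right_unique hk)
    · exact absurd h.up (by simp [hk.down])

lemma pathSetoid_isKDistantNC_zero (f : Fin n → MStep) : IsKDistantNC 0 (pathSetoid f) := by
  intro a b c d hac hbd hab hbc hcd
  rw [isArc_pathSetoid_iff] at hac hbd
  have := hac.2.2 b hab hbc
  have := hbd.2.2 (c + 1) (by omega) hcd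
  have := hac.2.1
  omega

section Partition

variable {r : Setoid (Fin n)}

lemma exists_isArc_le {x y : Fin n} (hxy : x < y) (h : r x y) : ∃ z, IsArc r x z ∧ z ≤ y := by
  induction y using WellFoundedLT.induction with
  | ind y ih =>
    by_cases harc : ∀ k, x < k → k < y → ¬ r x k
    · exact ⟨y, ⟨hxy, h, harc⟩, le_rfl⟩
    · push Not at harc
      obtain ⟨k, hxk, hky, hk⟩ := harc
      obtain ⟨z, hz, hzk⟩ := ih k hky hxk hk
      exact ⟨z, hz, hzk.trans hky.le⟩

variable (hr : IsKDistantNC 0 r)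
include hr

lemma not_rel_of_lt_of_lt {x y z : Fin n} (hxy : x < y) (hyz : y < z) (h : r x y)
    (h' : r y z) : False := by
  -- Two consecutive arcs `(x, y')`, `(y', z')` of a block are excluded (take `b = c = y'`).
  obtain ⟨y', hxy', hy'y⟩ := exists_isArc_le hxy h
  obtain ⟨z', hyz', -⟩ :=
    exists_isArc_le (hy'y.trans_lt hyz) (r.trans (r.symm hxy'.2.1) (r.trans h h'))
  exact Nat.not_lt_zero _ (hr x y' y' z' hxy' hyz' hxy'.1 le_rfl hyz'.1)

lemma eq_of_rel_of_rel {x y z : Fin n} (hy : r x y) (hz : r x z) (hxy : x ≠ y) (hxz : x ≠ z) :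
    y = z := by
  by_contra hne
  wlog hlt : y < z generalizing y z
  · exact this hz hy hxz hxy (Ne.symm hne) (lt_of_le_of_ne (not_lt.mp hlt) (Ne.symm hne))
  rcases lt_or_gt_of_ne hxy with h1 | h1
  · exact not_rel_of_lt_of_lt hr h1 hlt hy (r.trans (r.symm hy) hz)
  rcases lt_or_gt_of_ne hxz with h2 | h2
  · exact not_rel_of_lt_of_lt hr h1 h2 (r.symm hy) hz
  · exact not_rel_of_lt_of_lt hr hlt h2 (r.trans (r.symm hy) hz) (r.symm hz)

lemma isArc_of_lt_of_rel {a b : Fin n} (hab : a < b) (h : r a b) : IsArc r a b :=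
  ⟨hab, h, fun _ hak hkb hk => hkb.ne (eq_of_rel_of_rel hr hk h hak.ne hab.ne)⟩

lemma not_crossing {a b x y : Fin n} (hax : a < x) (hxb : x ≤ b) (hby : b < y) (hab : r a b)
    (hxy : r x y) : False :=
  Nat.not_lt_zero _ (hr a x b y (isArc_of_lt_of_rel hr (hax.trans_le hxb) hab)
    (isArc_of_lt_of_rel hr (hxb.trans_lt hby) hxy) hax hxb hby)

lemma nested_of_lt_of_le {a b x y : Fin n} (hab : a < b) (rab : r a b) (rxy : r x y)
    (hxa : x < a) (hay : a ≤ y) : b < y := by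
  rcases lt_trichotomy y b with hyb | rfl | hby
  · exact (not_crossing hr hxa hay hyb rxy rab).elim
  · exact absurd (eq_of_rel_of_rel hr (r.symm rxy) (r.symm rab) (hxa.trans hab).ne' hab.ne') hxa.ne
  · exact hby

lemma nested_of_le_of_lt {a b x y : Fin n} (hab : a < b) (rab : r a b) (rxy : r x y)
    (hxb : x ≤ b) (hby : b < y) : x < a := by
  rcases lt_trichotomy x a with hxa | rfl | hax
  · exact hxa
  · exact absurd (eq_of_rel_of_rel hr rxy rab (hxb.trans_lt hby).ne hab.ne) hby.ne'
  · exact (not_crossing hr hax hxb hby rab rxy).elim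

open Classical in
lemma card_partners_eq_ite {i : Fin n} (p : Fin n → Prop) [DecidablePred p]
    (hp : ∀ j, p j → i ≠ j) :
    #{j | p j ∧ r i j} = if ∃ j, p j ∧ r i j then 1 else 0 := by
  split_ifs with h
  · obtain ⟨j, hj⟩ := h
    refine card_eq_one.mpr ⟨j, eq_singleton_iff_unique_mem.mpr ⟨by simpa using hj, ?_⟩⟩
    simp only [mem_filter, mem_univ, true_and]
    exact fun k hk => eq_of_rel_of_rel hr hk.2 hj.2 (hp k hk.1) (hp j hj.1)
  · simpa using h

end Partition

open Classical in
noncomputable def stepOf (r : Setoid (Fin n)) (i : Fin n) : MStep :=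
  if ∃ j, i < j ∧ r i j then .up else if ∃ j, j < i ∧ r i j then .down else .flat

lemma stepOf_eq_up_iff (r : Setoid (Fin n)) (i : Fin n) :
    stepOf r i = .up ↔ ∃ j, i < j ∧ r i j := by
  unfold stepOf
  split_ifs <;> simp_all

open Classical in
noncomputable def straddling (r : Setoid (Fin n)) (k : ℕ) : Finset (Fin n × Fin n) :=
  {p | p.1 < p.2 ∧ r p.1 p.2 ∧ (p.1 : ℕ) < k ∧ k ≤ (p.2 : ℕ)}

section StepOf

variable {r : Setoid (Fin n)} (hr : IsKDistantNC 0 r)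
include hr

open Classical in
lemma val_stepOf (i : Fin n) :
    (stepOf r i).val = (#{j | i < j ∧ r i j} : ℤ) - #{j | j < i ∧ r i j} := by
  rw [card_partners_eq_ite hr _ fun _ h => h.ne, card_partners_eq_ite hr _ fun _ h => h.ne']
  unfold stepOf
  split_ifs with h1 h2 h2 <;> try rfl
  obtain ⟨j, hij, rij⟩ := h1
  obtain ⟨k, hki, rik⟩ := h2
  exact absurd (eq_of_rel_of_rel hr rij rik hij.ne hki.ne') (hki.trans hij).ne'

open Classical in
lemma height_stepOf (k : ℕ) : height (stepOf r) k = #(straddling r k) := by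
  -- Summing `val_stepOf` over `i < k` counts the pairs starting before `k` minus those ending
  -- before `k`.
  set A : Finset (Fin n × Fin n) := {p | (p.1 : ℕ) < k ∧ p.1 < p.2 ∧ r p.1 p.2}
  set B : Finset (Fin n × Fin n) := {p | (p.2 : ℕ) < k ∧ p.1 < p.2 ∧ r p.1 p.2}
  have hA : ∑ i ∈ ({i | (i : ℕ) < k} : Finset (Fin n)),
      (#{j | i < j ∧ r i j} : ℤ) = #A := by
    simp only [A, card_filter, Fintype.sum_prod_type, sum_filter, ite_and]
    push_cast
    exact sum_congr rfl fun i _ => by split_ifs <;> simp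
  have hB : ∑ i ∈ ({i | (i : ℕ) < k} : Finset (Fin n)),
      (#{j | j < i ∧ r i j} : ℤ) = #B := by
    simp only [B, card_filter, Fintype.sum_prod_type_right, sum_filter, ite_and, Setoid.comm' r]
    push_cast
    exact sum_congr rfl fun i _ => by split_ifs <;> simp
  have hBA : B ⊆ A := fun p hp => by
    simp only [A, B, mem_filter, mem_univ, true_and] at hp ⊢
    exact ⟨by omega, hp.2⟩
  have hS : straddling r k = A \ B := by
    ext p
    simp only [straddling, A, B, mem_sdiff, mem_filter, mem_univ, true_and, not_and]
    constructor
    · rintro ⟨h, rp, hk, hk'⟩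
      exact ⟨⟨hk, h, rp⟩, fun h' _ _ => absurd h' (not_lt.mpr hk')⟩
    · rintro ⟨⟨hk, h, rp⟩, hk'⟩
      exact ⟨h, rp, hk, not_lt.mp fun h' => hk' h' h rp⟩
  rw [height, sum_congr rfl fun i _ => val_stepOf hr i, sum_sub_distrib, hA, hB, hS,
    card_sdiff_of_subset hBA, Nat.cast_sub (card_le_card hBA)]

lemma isMotzkin_stepOf : IsMotzkin (List.ofFn (stepOf r)) := by
  refine (isMotzkin_ofFn_iff _).mpr ⟨fun k => by rw [height_stepOf hr]; positivity, ?_⟩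
  rw [height_stepOf hr, Nat.cast_eq_zero, card_eq_zero, eq_empty_iff_forall_notMem]
  intro p hp
  simp only [straddling, mem_filter] at hp
  omega

lemma straddling_eq_of_rel {a b : Fin n} (hab : a < b) (rab : r a b) :
    straddling r a = straddling r (b + 1) := by
  ext ⟨x, y⟩
  simp only [straddling, mem_filter, mem_univ, true_and, and_congr_right_iff]
  intro hxy rxy
  constructor
  · rintro ⟨hxa, hay⟩
    have := nested_of_lt_of_le hr hab rab rxy hxa hay
    omega
  · rintro ⟨hxb, hby⟩
    have := nested_of_le_of_lt hr hab rab rxy (Nat.lt_succ_iff.mp hxb) hby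
    omega

lemma straddling_ssubset_of_rel {a b : Fin n} (hab : a < b) (rab : r a b) {m : ℕ}
    (ham : a < m) (hmb : m ≤ b) :
    straddling r a ⊂ straddling r m := by
  have hsub : straddling r a ⊆ straddling r m := fun ⟨x, y⟩ hp => by
    simp only [straddling, mem_filter, mem_univ, true_and] at hp ⊢
    have := nested_of_lt_of_le hr hab rab hp.2.1 hp.2.2.1 hp.2.2.2
    exact ⟨hp.1, hp.2.1, by omega, by omega⟩
  refine (ssubset_iff_of_subset hsub).mpr ⟨(a, b), ?_, ?_⟩
  · simp only [straddling, mem_filter, mem_univ, true_and]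
    exact ⟨hab, rab, ham, hmb⟩
  · simp [straddling]

lemma matched_stepOf {a b : Fin n} (hab : a < b) (rab : r a b) : Matched (stepOf r) a b := by
  refine ⟨hab, by rw [height_stepOf hr, height_stepOf hr, straddling_eq_of_rel hr hab rab],
    fun m ham hmb => ?_⟩
  rw [height_stepOf hr, height_stepOf hr]
  exact_mod_cast card_lt_card (straddling_ssubset_of_rel hr hab rab ham hmb)

lemma matched_stepOf_iff {a b : Fin n} : Matched (stepOf r) a b ↔ a < b ∧ r a b := by
  refine ⟨fun h => ?_, fun h => matched_stepOf hr h.1 h.2⟩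
  obtain ⟨c, hac, rac⟩ := (stepOf_eq_up_iff r a).mp h.up
  obtain rfl := h.right_unique (matched_stepOf hr hac rac)
  exact ⟨hac, rac⟩

lemma pathSetoid_stepOf : pathSetoid (stepOf r) = r := by
  ext x y
  change x = y ∨ Matched _ x y ∨ Matched _ y x ↔ r x y
  rw [matched_stepOf_iff hr, matched_stepOf_iff hr]
  constructor
  · rintro (rfl | h | h)
    exacts [r.refl _, h.2, r.symm h.2]
  · intro h
    rcases lt_trichotomy x y with hlt | rfl | hgt
    exacts [.inr (.inl ⟨hlt, h⟩), .inl rfl, .inr (.inr ⟨hgt, r.symm h⟩)]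

end StepOf

section Motzkin

variable {f : Fin n → MStep} (hpos : ∀ k, 0 ≤ height f k)
include hpos

lemma exists_gt_pathSetoid_iff (hend : height f n = 0) (i : Fin n) :
    (∃ j, i < j ∧ pathSetoid f i j) ↔ f i = .up := by
  refine ⟨?_, fun h => ?_⟩
  · rintro ⟨j, hij, rfl | h | h⟩
    exacts [absurd hij (lt_irrefl _), h.up, absurd (hij.trans h.1) (lt_irrefl _)]
  · obtain ⟨j, hj⟩ := exists_matched_of_up hpos hend h
    exact ⟨j, hj.1, .inr (.inl hj)⟩

lemma exists_lt_pathSetoid_iff (i : Fin n) :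
    (∃ j, j < i ∧ pathSetoid f i j) ↔ f i = .down := by
  refine ⟨?_, fun h => ?_⟩
  · rintro ⟨j, hji, rfl | h | h⟩
    exacts [absurd hji (lt_irrefl _), absurd (hji.trans h.1) (lt_irrefl _), h.down]
  · obtain ⟨j, hj⟩ := exists_matched_of_down hpos h
    exact ⟨j, hj.1, .inr (.inr hj)⟩

lemma stepOf_pathSetoid (hend : height f n = 0) : stepOf (pathSetoid f) = f := by
  funext i
  simp only [stepOf, exists_gt_pathSetoid_iff hpos hend, exists_lt_pathSetoid_iff hpos]
  cases f i <;> simp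

end Motzkin

noncomputable def motzkinEquiv (n : ℕ) :
    {f : Fin n → MStep // IsMotzkin (List.ofFn f)} ≃
      {r : Setoid (Fin n) // IsKDistantNC 0 r} where
  toFun f := ⟨pathSetoid f.1, pathSetoid_isKDistantNC_zero f.1⟩
  invFun r := ⟨stepOf r, isMotzkin_stepOf r.2⟩
  left_inv f := Subtype.ext <| by
    obtain ⟨hpos, hend⟩ := (isMotzkin_ofFn_iff f.1).mp f.2
    exact stepOf_pathSetoid hpos hend
  right_inv r := Subtype.ext (pathSetoid_stepOf r.2)

lemma mWeight_one (l : List MStep) : mWeight (fun _ => 1) (fun _ => 1) l = 1 :=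
  prod_eq_one fun i _ => by cases l.getD i .up <;> rfl

open Classical in
lemma motSum_one (n : ℕ) :
    motSum n (fun _ => 1) (fun _ => 1) = #{f : Fin n → MStep | IsMotzkin (List.ofFn f)} := by
  simp only [motSum, mWeight_one, sum_boole]

end NC0

/-- `#NC_0(n)` equals the number of Motzkin paths of length `n`, i.e.
`Mot_n((1,1,…),(1,1,…))`. -/
theorem nc0_eq_motzkin_count (n : ℕ) :
    (Nat.card {r : Setoid (Fin n) // IsKDistantNC 0 r} : ℚ) =
      motSum n (fun _ => 1) (fun _ => 1) := by
  classical
  rw [NC0.motSum_one, ← Fintype.card_subtype, ← Nat.card_eq_fintype_card,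
    Nat.card_congr (NC0.motzkinEquiv n)]
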